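/- Let K ⊂ ℝⁿ be compact and let M ⊂ J² = ℝ × ℝⁿ × Sym²(ℝⁿ) be a constant coefficient convex cone subequation. If there exists a smooth function ψ on a neighborhood of K whose 2-jet (ψ(x), Dψ(x), D²ψ(x)) lies in Int M for all x ∈ Int K, then every upper semicontinuous M̃-subharmonic function u on K (in the viscosity sense) with u ≤ 0 on ∂K satisfies u ≤ 0 on K. -/

import Mathlib

open Pointwise

/-- The 2-jet space `J² = ℝ × ℝⁿ × Sym²(ℝⁿ)`, with the gradient represented as a linear
functional and the Hessian as a (symmetric) continuous bilinear form on `ℝⁿ`. -/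
abbrev Jet2 (n : ℕ) : Type :=
  ℝ × (EuclideanSpace ℝ (Fin n) →L[ℝ] ℝ) ×
    (EuclideanSpace ℝ (Fin n) →L[ℝ] EuclideanSpace ℝ (Fin n) →L[ℝ] ℝ)

/-- The 2-jet `(φ(x), Dφ(x), D²φ(x))` of a function `φ` at `x`. -/
noncomputable def jet {n : ℕ} (φ : EuclideanSpace ℝ (Fin n) → ℝ)
    (x : EuclideanSpace ℝ (Fin n)) : Jet2 n :=
  (φ x, fderiv ℝ φ x, fderiv ℝ (fun y => fderiv ℝ φ y) x)

/-- `𝒫 = {(0,0,A) : A ≥ 0}`. -/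
def posCone (n : ℕ) : Set (Jet2 n) :=
  {J | J.1 = 0 ∧ J.2.1 = 0 ∧ ∀ v, 0 ≤ J.2.2 v v}

/-- `𝒩 = {(r,0,0) : r ≤ 0}`. -/
def negCone (n : ℕ) : Set (Jet2 n) :=
  {J | J.1 ≤ 0 ∧ J.2.1 = 0 ∧ J.2.2 = 0}

/-- The Dirichlet dual `M̃ = −(∼ Int M)`. -/
def dirichletDual {n : ℕ} (M : Set (Jet2 n)) : Set (Jet2 n) :=
  -((interior M)ᶜ)

/-- Viscosity `F`-subharmonicity on `X` for an upper semicontinuous `[−∞,∞)`-valued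
function `u`: at every point of `X`, every `C²` test function `φ` touching `u` from
above has its 2-jet in `F`. -/
def IsFSubharmonic {n : ℕ} (F : Set (Jet2 n)) (X : Set (EuclideanSpace ℝ (Fin n)))
    (u : EuclideanSpace ℝ (Fin n) → EReal) : Prop :=
  ∀ x ∈ X, ∀ (φ : EuclideanSpace ℝ (Fin n) → ℝ) (V : Set (EuclideanSpace ℝ (Fin n))),
    IsOpen V → x ∈ V → ContDiffOn ℝ 2 φ V →
    (∀ y ∈ V, u y ≤ (φ y : EReal)) → u x = (φ x : EReal) → jet φ x ∈ F

private lemma usc_exists_max {n : ℕ} {K : Set (EuclideanSpace ℝ (Fin n))}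
    (hK : IsCompact K) (hne : K.Nonempty) {v : EuclideanSpace ℝ (Fin n) → EReal}
    (hv : UpperSemicontinuousOn v K) : ∃ x₀ ∈ K, ∀ x ∈ K, v x ≤ v x₀ := by
  obtain ⟨c, hMono, hc, hcS⟩ :=
    exists_seq_tendsto_sSup (hne.image v) (OrderTop.bddAbove _)
  have hex : ∀ k, ∃ a ∈ K, v a = c k := fun k => hcS k
  choose x hxK hxv using hex
  obtain ⟨x₀, hx₀K, φ, hφ, hlim⟩ := hK.tendsto_subseq hxK
  refine ⟨x₀, hx₀K, fun y hy => le_trans (le_sSup (Set.mem_image_of_mem v hy)) ?_⟩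
  by_contra hlt
  push_neg at hlt
  obtain ⟨y, h1, h2⟩ := exists_between hlt
  have hx : Filter.Tendsto (fun k => x (φ k)) Filter.atTop (nhdsWithin x₀ K) := by
    rw [tendsto_nhdsWithin_iff]
    exact ⟨hlim, Filter.Eventually.of_forall fun k => hxK (φ k)⟩
  have hev : ∀ᶠ k in Filter.atTop, v (x (φ k)) < y := hx.eventually (hv x₀ hx₀K y h1)
  have hlim2 : Filter.Tendsto (fun k => v (x (φ k))) Filter.atTop (nhds (sSup (v '' K))) := by
    have h := hc.comp hφ.tendsto_atTop
    simpa only [Function.comp_def, hxv] using h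
  have : sSup (v '' K) ≤ y := le_of_tendsto hlim2 (hev.mono fun k hk => hk.le)
  exact absurd (h2.trans_le this) (lt_irrefl _)

private lemma interior_add_negCone {n : ℕ} {M : Set (Jet2 n)} (hMN : M + negCone n ⊆ M)
    {J N : Jet2 n} (hJ : J ∈ interior M) (hN : N ∈ negCone n) : J + N ∈ interior M := by
  have hopen : IsOpen ((fun z => z + N) '' interior M) :=
    (isOpenMap_add_right N) _ isOpen_interior
  have hsub : (fun z => z + N) '' interior M ⊆ M := by
    rintro _ ⟨z, hz, rfl⟩
    exact hMN (Set.add_mem_add (interior_subset hz) hN)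
  exact interior_maximal hsub hopen ⟨J, hJ, rfl⟩

private lemma interior_smul_mem {n : ℕ} {M : Set (Jet2 n)}
    (hMcone : ∀ c : ℝ, 0 ≤ c → ∀ J ∈ M, c • J ∈ M) {δ : ℝ} (hδ : 0 < δ)
    {J : Jet2 n} (hJ : J ∈ interior M) : δ • J ∈ interior M := by
  have hopen : IsOpen (δ • interior M) := isOpen_interior.smul₀ hδ.ne'
  have hsub : δ • interior M ⊆ M := by
    rintro _ ⟨z, hz, rfl⟩
    exact hMcone δ hδ.le z (interior_subset hz)
  exact interior_maximal hsub hopen ⟨J, hJ, rfl⟩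

private lemma usc_add_cont {n : ℕ} {K : Set (EuclideanSpace ℝ (Fin n))}
    {u : EuclideanSpace ℝ (Fin n) → EReal} (hu : UpperSemicontinuousOn u K)
    (hufin : ∀ x, u x ≠ ⊤)
    {g : EuclideanSpace ℝ (Fin n) → ℝ} (hg : ContinuousOn g K) :
    UpperSemicontinuousOn (fun x => u x + (g x : EReal)) K := by
  intro x hx y hy
  obtain ⟨d, hd1, hd2⟩ := EReal.lt_iff_exists_real_btwn.1 hy
  obtain ⟨c, hc1, hc2⟩ : ∃ c : ℝ, u x < (c : EReal) ∧ c + g x < d := by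
    rcases eq_or_ne (u x) ⊥ with hb | hb
    · exact ⟨d - g x - 1, by rw [hb]; exact bot_lt_iff_ne_bot.2 (EReal.coe_ne_bot _), by linarith⟩
    · lift u x to ℝ using ⟨hufin x, hb⟩ with r hr
      have : (r : EReal) + (g x : EReal) < (d : EReal) := hd1
      rw [← EReal.coe_add, EReal.coe_lt_coe_iff] at this
      exact ⟨(r + (d - g x)) / 2, by exact_mod_cast (by linarith : r < (r + (d - g x)) / 2),
        by linarith⟩
  have h1 : ∀ᶠ z in nhdsWithin x K, u z < (c : EReal) := hu x hx c hc1
  have h2 : ∀ᶠ z in nhdsWithin x K, g z < d - c :=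
    (hg x hx).eventually_lt_const (by linarith)
  filter_upwards [h1, h2] with z hz1 hz2
  calc u z + (g z : EReal) < (c : EReal) + ((d - c : ℝ) : EReal) :=
        EReal.add_lt_add hz1 (by exact_mod_cast hz2)
    _ = (d : EReal) := by rw [← EReal.coe_add]; norm_num
    _ < y := hd2

/-- **Theorem B.2, Zero Maximum Principle.** Let `M` be a constant
coefficient convex cone subequation and `K ⊂ ℝⁿ` compact. If some function `ψ`, smooth
on a neighborhood of `K`, is strictly `M`-subharmonic on `Int K` (its 2-jet lies in
`Int M`), then every upper semicontinuous `M̃`-subharmonic function `u` on `K` with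
`u ≤ 0` on `∂K` satisfies `u ≤ 0` on `K`. -/
theorem zero_maximum_principle (n : ℕ) (M : Set (Jet2 n))
    (hMcl : IsClosed M) (hMconv : Convex ℝ M)
    (hMcone : ∀ c : ℝ, 0 ≤ c → ∀ J ∈ M, c • J ∈ M)
    (hMP : M + posCone n ⊆ M) (hMN : M + negCone n ⊆ M)
    (hMT : M = closure (interior M))
    (K : Set (EuclideanSpace ℝ (Fin n))) (hK : IsCompact K)
    (U : Set (EuclideanSpace ℝ (Fin n))) (hU : IsOpen U) (hKU : K ⊆ U)
    (ψ : EuclideanSpace ℝ (Fin n) → ℝ) (hψ : ContDiffOn ℝ (⊤ : ℕ∞) ψ U)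
    (hψM : ∀ x ∈ interior K, jet ψ x ∈ interior M)
    (u : EuclideanSpace ℝ (Fin n) → EReal)
    (hu : UpperSemicontinuousOn u K) (hufin : ∀ x, u x ≠ ⊤)
    (husub : IsFSubharmonic (dirichletDual M) (interior K) u)
    (hbd : ∀ x ∈ frontier K, u x ≤ 0) :
    ∀ x ∈ K, u x ≤ 0 := by
  intro x hxK
  obtain ⟨B0, hB0⟩ := hK.exists_bound_of_continuousOn ((hψ.continuousOn).mono hKU)
  set B : ℝ := max B0 0 with hBdef
  have hB : ∀ y ∈ K, |ψ y| ≤ B := fun y hy => (hB0 y hy).trans (le_max_left _ _)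
  have hBnn : (0 : ℝ) ≤ B := le_max_right _ _
  have key : ∀ δ : ℝ, 0 < δ → u x ≤ ((δ * (2 * B) : ℝ) : EReal) := by
    intro δ hδ
    have hgcont : ContinuousOn (fun z => δ * ψ z) K :=
      continuousOn_const.mul ((hψ.continuousOn).mono hKU)
    have hv : UpperSemicontinuousOn (fun z => u z + ((δ * ψ z : ℝ) : EReal)) K :=
      usc_add_cont hu hufin hgcont
    obtain ⟨x₀, hx₀K, hmax⟩ := usc_exists_max hK ⟨x, hxK⟩ hv
    have hbound : u x₀ + ((δ * ψ x₀ : ℝ) : EReal) ≤ ((δ * B : ℝ) : EReal) := by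
      by_cases hx₀i : x₀ ∈ interior K
      · by_contra hgt
        push_neg at hgt
        have hvpos : (0 : EReal) < u x₀ + ((δ * ψ x₀ : ℝ) : EReal) :=
          lt_of_le_of_lt
            (by exact_mod_cast mul_nonneg hδ.le hBnn : (0 : EReal) ≤ ((δ * B : ℝ) : EReal)) hgt
        have hubot : u x₀ ≠ ⊥ := by
          intro hb
          rw [hb, EReal.bot_add] at hvpos
          exact absurd hvpos (by simp)
        obtain ⟨r, hr⟩ : ∃ r : ℝ, u x₀ = (r : EReal) := by
          lift u x₀ to ℝ using ⟨hufin x₀, hubot⟩ with r hr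
          exact ⟨r, rfl⟩
        have hrpos : 0 < r + δ * ψ x₀ := by
          rw [hr, ← EReal.coe_add] at hvpos
          exact_mod_cast hvpos
        have hx₀U : x₀ ∈ U := hKU hx₀K
        have hψx : ContDiffAt ℝ (⊤ : ℕ∞) ψ x₀ := hψ.contDiffAt (hU.mem_nhds hx₀U)
        set φt : EuclideanSpace ℝ (Fin n) → ℝ := fun y => r + δ * ψ x₀ - δ * ψ y with hφdef
        have hφC2 : ContDiffOn ℝ 2 φt (interior K) := by
          rw [hφdef]
          exact contDiffOn_const.sub (contDiffOn_const.mul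
            ((hψ.of_le (WithTop.coe_le_coe.2 le_top)).mono (interior_subset.trans hKU)))
        have htouch : ∀ y ∈ interior K, u y ≤ ((φt y : ℝ) : EReal) := by
          intro y hy
          have hmy : u y + ((δ * ψ y : ℝ) : EReal) ≤ ((r + δ * ψ x₀ : ℝ) : EReal) := by
            have h := hmax y (interior_subset hy)
            rwa [hr, ← EReal.coe_add] at h
          have h2 := (EReal.le_sub_iff_add_le (Or.inl (EReal.coe_ne_bot _))
            (Or.inl (EReal.coe_ne_top _))).2 hmy
          rw [← EReal.coe_sub] at h2
          exact h2
        have hφval : φt x₀ = r := by rw [hφdef]; ring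
        have heqx : u x₀ = ((φt x₀ : ℝ) : EReal) := by rw [hφval, hr]
        have hjetmem := husub x₀ hx₀i φt (interior K) isOpen_interior hx₀i hφC2 htouch heqx
        rw [dirichletDual, Set.mem_neg] at hjetmem
        apply hjetmem
        have hDψ : HasFDerivAt ψ (fderiv ℝ ψ x₀) x₀ := (hψx.differentiableAt (by simp)).hasFDerivAt
        have hφ1 : fderiv ℝ φt x₀ = -(δ • fderiv ℝ ψ x₀) := by
          rw [hφdef]
          exact ((hDψ.const_mul δ).const_sub (r + δ * ψ x₀)).fderiv
        have h2ψ : DifferentiableAt ℝ (fun y => fderiv ℝ ψ y) x₀ :=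
          (hψx.fderiv_right (m := 1) ((WithTop.coe_le_coe.2 le_top))).differentiableAt one_ne_zero
        have heqf : (fun y => fderiv ℝ φt y) =ᶠ[nhds x₀] (fun y => -(δ • fderiv ℝ ψ y)) := by
          filter_upwards [hU.mem_nhds hx₀U] with y hy
          have hDy : HasFDerivAt ψ (fderiv ℝ ψ y) y :=
            ((hψ.contDiffAt (hU.mem_nhds hy)).differentiableAt (by simp)).hasFDerivAt
          rw [hφdef]
          exact ((hDy.const_mul δ).const_sub (r + δ * ψ x₀)).fderiv
        have hsnd : fderiv ℝ (fun y => fderiv ℝ φt y) x₀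
            = -(δ • fderiv ℝ (fun y => fderiv ℝ ψ y) x₀) := by
          rw [heqf.fderiv_eq]
          exact ((h2ψ.hasFDerivAt.const_smul δ).neg).fderiv
        have hneg : -(jet φt x₀) = δ • jet ψ x₀ + (((-r - δ * ψ x₀ : ℝ)), 0, 0) := by
          rw [jet, jet, hφval, hφ1, hsnd]
          refine Prod.ext ?_ (Prod.ext ?_ ?_)
          · simp only [Prod.fst_neg, Prod.fst_add, Prod.smul_fst, smul_eq_mul]; ring
          · set_option synthInstance.maxHeartbeats 400000 in simp
          · set_option synthInstance.maxHeartbeats 400000 in (simp; exact (neg_neg (δ • fderiv ℝ (fun y => fderiv ℝ ψ y) x₀)).trans (add_zero _).symm)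
        rw [hneg]
        exact interior_add_negCone hMN (interior_smul_mem hMcone hδ (hψM x₀ hx₀i))
          ⟨by simpa using (by linarith : -r - δ * ψ x₀ ≤ 0), rfl, rfl⟩
      · have hfk : x₀ ∈ frontier K := by
          rw [hK.isClosed.frontier_eq]; exact ⟨hx₀K, hx₀i⟩
        have hu0 : u x₀ ≤ 0 := hbd x₀ hfk
        calc u x₀ + ((δ * ψ x₀ : ℝ) : EReal) ≤ 0 + ((δ * ψ x₀ : ℝ) : EReal) :=
              add_le_add_left hu0 _
          _ = ((δ * ψ x₀ : ℝ) : EReal) := zero_add _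
          _ ≤ ((δ * B : ℝ) : EReal) := by
              apply EReal.coe_le_coe_iff.2
              nlinarith [(abs_le.1 (hB x₀ hx₀K)).2]
    have hux : u x + ((δ * ψ x : ℝ) : EReal) ≤ ((δ * B : ℝ) : EReal) :=
      (hmax x hxK).trans hbound
    have h3 := (EReal.le_sub_iff_add_le (Or.inl (EReal.coe_ne_bot _))
      (Or.inl (EReal.coe_ne_top _))).2 hux
    rw [← EReal.coe_sub] at h3
    refine h3.trans (EReal.coe_le_coe_iff.2 ?_)
    nlinarith [mul_nonneg hδ.le (by linarith [(abs_le.1 (hB x hxK)).1] : (0:ℝ) ≤ B + ψ x)]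
  by_contra hpos
  push_neg at hpos
  obtain ⟨s, hs1, hs2⟩ := EReal.lt_iff_exists_real_btwn.1 hpos
  have hs0 : (0 : ℝ) < s := by exact_mod_cast hs1
  have hδ : 0 < s / (2 * B + 1) := div_pos hs0 (by linarith)
  have h1 := key _ hδ
  have h2 : (s / (2 * B + 1)) * (2 * B) < s := by
    rw [div_mul_eq_mul_div, div_lt_iff₀ (by linarith : (0:ℝ) < 2 * B + 1)]
    nlinarith
  exact absurd ((h1.trans_lt (by exact_mod_cast h2)).trans hs2) (lt_irrefl _)
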